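/- arXiv:2310.20579 — 2 statements merged into one kernel-verified Lean document; each statement's English description precedes it below -/
import Mathlib

section
/- Let h ∈ ℝ^p be a fixed nonzero vector, let m ≥ 2, let δ ∈ (0, 1/2], and let W ∈ ℝ^{m×p} be a random matrix with i.i.d. entries W_{ij} ~ N(0, β) for some β > 0. Then with probability at least 1 − δ over the draw of W, ‖ReLU(W h)‖₂² ≤ m β · log(2m/δ) · (1 + log(2/δ)) · ‖h‖₂². -/
open MeasureTheory ProbabilityTheory Matrix Finset

lemma gauss_mgf_int {β : NNReal} (hβ : β ≠ 0) (c : ℝ) :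
    Integrable (fun x => Real.exp (c * x)) (gaussianReal 0 β) ∧
    ∫ x, Real.exp (c * x) ∂(gaussianReal 0 β) = Real.exp (c ^ 2 * β / 2) := by
  have hb : (β : ℝ) ≠ 0 := NNReal.coe_ne_zero.mpr hβ
  have hkey : (fun x => ((gaussianPDFReal 0 β x).toNNReal : NNReal) • Real.exp (c * x))
      = fun x => Real.exp (c ^ 2 * β / 2) * gaussianPDFReal (c * β) β x := by
    funext x
    rw [NNReal.smul_def, smul_eq_mul, Real.coe_toNNReal _ (gaussianPDFReal_nonneg _ _ _)]
    simp only [gaussianPDFReal]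
    rw [mul_assoc, ← Real.exp_add,
      show Real.exp (c ^ 2 * β / 2) * ((Real.sqrt (2 * Real.pi * β))⁻¹
          * Real.exp (-(x - c * β) ^ 2 / (2 * β)))
        = (Real.sqrt (2 * Real.pi * β))⁻¹
          * Real.exp (c ^ 2 * β / 2 + -(x - c * β) ^ 2 / (2 * β)) by
        rw [mul_left_comm, ← Real.exp_add]]
    congr 1
    field_simp
    ring
  have hmeas : Measurable fun x => (gaussianPDFReal 0 β x).toNNReal :=
    (measurable_gaussianPDFReal 0 β).real_toNNReal
  have hrw : gaussianReal 0 β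
      = volume.withDensity fun x => ((gaussianPDFReal 0 β x).toNNReal : ENNReal) := by
    rw [gaussianReal_of_var_ne_zero 0 hβ, gaussianPDF_def]
    rfl
  constructor
  · rw [hrw, integrable_withDensity_iff_integrable_smul hmeas, hkey]
    exact (integrable_gaussianPDFReal _ _).const_mul _
  · rw [hrw, integral_withDensity_eq_integral_smul hmeas]
    rw [show (fun x => ((gaussianPDFReal 0 β x).toNNReal : NNReal) • Real.exp (c * x)) = _
      from hkey]
    rw [integral_const_mul, integral_gaussianPDFReal_eq_one _ hβ, mul_one]

lemma pi_int_prod {ι : Type*} [Fintype ι] (μ : Measure ℝ) [IsProbabilityMeasure μ]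
    (f : ι → ℝ → ℝ) (hf : ∀ i, Integrable (f i) μ) :
    Integrable (fun x : ι → ℝ => ∏ i, f i (x i)) (Measure.pi fun _ => μ) ∧
    ∫ x : ι → ℝ, ∏ i, f i (x i) ∂(Measure.pi fun _ => μ) = ∏ i, ∫ y, f i y ∂μ := by
  letI : MeasureSpace ℝ := ⟨μ⟩
  haveI : SigmaFinite (volume : Measure ℝ) := inferInstanceAs (SigmaFinite μ)
  have hvol : (Measure.pi fun _ : ι => μ) = (volume : Measure (ι → ℝ)) := rfl
  rw [hvol]
  exact ⟨Integrable.fintype_prod hf, integral_fintype_prod_eq_prod (fun i => f i)⟩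

lemma pi_gauss_mgf {ι : Type*} [Fintype ι] {β : NNReal} (hβ : β ≠ 0) (c : ι → ℝ) :
    Integrable (fun x : ι → ℝ => Real.exp (∑ i, c i * x i))
      (Measure.pi fun _ => gaussianReal 0 β) ∧
    ∫ x : ι → ℝ, Real.exp (∑ i, c i * x i) ∂(Measure.pi fun _ => gaussianReal 0 β)
      = Real.exp ((∑ i, c i ^ 2) * β / 2) := by
  have h1 := fun i => gauss_mgf_int hβ (c i)
  have hfun : (fun x : ι → ℝ => Real.exp (∑ i, c i * x i))
      = fun x => ∏ i, Real.exp (c i * x i) := by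
    funext x; rw [Real.exp_sum]
  obtain ⟨hint, heq⟩ := pi_int_prod (gaussianReal 0 β)
    (fun i y => Real.exp (c i * y)) (fun i => (h1 i).1)
  rw [hfun]
  refine ⟨hint, ?_⟩
  rw [heq, Finset.prod_congr rfl (fun i _ => (h1 i).2), ← Real.exp_sum]
  congr 1
  rw [Finset.sum_mul, Finset.sum_div]

lemma gauss_tail {ι : Type*} [Fintype ι] {β : NNReal} (hβ : β ≠ 0) (c : ι → ℝ)
    (hc : 0 < ∑ i, c i ^ 2) {t : ℝ} (ht : 0 ≤ t) :
    (Measure.pi fun _ : ι => gaussianReal 0 β) {x | t ≤ ∑ i, c i * x i}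
      ≤ ENNReal.ofReal (Real.exp (- t ^ 2 / (2 * β * ∑ i, c i ^ 2))) := by
  have hb : (0 : ℝ) < β := lt_of_le_of_ne (NNReal.coe_nonneg β)
    (fun hcon => hβ (by exact_mod_cast hcon.symm))
  set μ := Measure.pi fun _ : ι => gaussianReal 0 β with hμ
  set S := ∑ i, c i ^ 2 with hSdef
  have hv : (0 : ℝ) < β * S := mul_pos hb hc
  set s := t / (β * S) with hsdef
  have hs : 0 ≤ s := div_nonneg ht hv.le
  have hmg := pi_gauss_mgf hβ (fun i => s * c i)
  have hexp : (fun x : ι → ℝ => Real.exp (s * ∑ i, c i * x i))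
      = fun x => Real.exp (∑ i, (s * c i) * x i) := by
    funext x
    rw [Finset.mul_sum]
    simp_rw [mul_assoc]
  have hint : Integrable (fun x : ι → ℝ => Real.exp (s * ∑ i, c i * x i)) μ := by
    rw [hexp]; exact hmg.1
  have hch := measure_ge_le_exp_mul_mgf (X := fun x : ι → ℝ => ∑ i, c i * x i) (μ := μ)
    t hs hint
  have hmgf : mgf (fun x : ι → ℝ => ∑ i, c i * x i) μ s
      = Real.exp ((∑ i, (s * c i) ^ 2) * β / 2) := by
    have : mgf (fun x : ι → ℝ => ∑ i, c i * x i) μ s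
        = ∫ x, Real.exp (s * ∑ i, c i * x i) ∂μ := rfl
    rw [this, hexp, hmg.2]
  have hSc : ∑ i, (s * c i) ^ 2 = s ^ 2 * S := by
    simp_rw [mul_pow]
    rw [← Finset.mul_sum]
  have hbound : Real.exp (-s * t) * Real.exp ((∑ i, (s * c i) ^ 2) * β / 2)
      = Real.exp (- t ^ 2 / (2 * β * S)) := by
    rw [← Real.exp_add]
    congr 1
    rw [hSc, hsdef]
    field_simp
    ring
  calc μ {x | t ≤ ∑ i, c i * x i}
      = ENNReal.ofReal ((μ {x | t ≤ ∑ i, c i * x i}).toReal) :=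
        (ENNReal.ofReal_toReal (measure_ne_top _ _)).symm
    _ ≤ ENNReal.ofReal (Real.exp (-s * t)
          * mgf (fun x : ι → ℝ => ∑ i, c i * x i) μ s) := ENNReal.ofReal_le_ofReal hch
    _ = ENNReal.ofReal (Real.exp (- t ^ 2 / (2 * β * S))) := by rw [hmgf, hbound]

/-- Let `h ∈ ℝ^p` be a fixed nonzero vector, `m ≥ 2`, `δ ∈ (0, 1/2]`, and let
`W ∈ ℝ^{m×p}` have i.i.d. `N(0, β)` entries. Then with probability at least `1 − δ`,
`‖ReLU(W h)‖₂² ≤ m β log(2m/δ) (1 + log(2/δ)) ‖h‖₂²`. -/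
theorem stmt11 {Ω : Type*} [MeasurableSpace Ω] (P : Measure Ω) [IsProbabilityMeasure P]
    (p m : ℕ) (hm : 2 ≤ m) (β : NNReal) (hβ : 0 < β)
    (h : Fin p → ℝ) (hh : h ≠ 0)
    (δ : ℝ) (hδ0 : 0 < δ) (hδ : δ ≤ 1 / 2)
    (W : Ω → Matrix (Fin m) (Fin p) ℝ)
    (hWm : Measurable fun ω => (fun ij : Fin m × Fin p => W ω ij.1 ij.2))
    (hW : P.map (fun ω => (fun ij : Fin m × Fin p => W ω ij.1 ij.2))
        = Measure.pi fun _ : Fin m × Fin p => gaussianReal 0 β) :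
    1 - ENNReal.ofReal δ ≤
      P {ω | ∑ i, (max ((W ω *ᵥ h) i) 0) ^ 2
          ≤ (m : ℝ) * β * Real.log (2 * m / δ) * (1 + Real.log (2 / δ)) * ∑ j, (h j) ^ 2} := by
  classical
  have hβ' : β ≠ 0 := hβ.ne'
  have hb : (0 : ℝ) < (β : ℝ) := hβ
  have hm2 : (2 : ℝ) ≤ (m : ℝ) := by exact_mod_cast hm
  have hm0 : (m : ℝ) ≠ 0 := by linarith
  have hS : 0 < ∑ j, h j ^ 2 := by
    obtain ⟨j, hj⟩ := Function.ne_iff.mp hh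
    exact Finset.sum_pos' (fun j _ => sq_nonneg _) ⟨j, Finset.mem_univ j, pow_two_pos_of_ne_zero hj⟩
  set S := ∑ j, h j ^ 2 with hSdef
  have hratio : (1 : ℝ) < 2 * m / δ := by
    rw [lt_div_iff₀ hδ0]; nlinarith
  have hL : 0 < Real.log (2 * m / δ) := Real.log_pos hratio
  set L := Real.log (2 * m / δ) with hLdef
  set v := (β : ℝ) * S with hvdef
  have hv : 0 < v := mul_pos hb hS
  set t := Real.sqrt (2 * v * L) with htdef
  have ht0 : 0 ≤ t := Real.sqrt_nonneg _
  have ht2 : t ^ 2 = 2 * v * L := Real.sq_sqrt (by positivity)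
  set vec := fun ω => (fun ij : Fin m × Fin p => W ω ij.1 ij.2) with hvecdef
  set μ := Measure.pi fun _ : Fin m × Fin p => gaussianReal 0 β with hmudef
  set c : Fin m → (Fin m × Fin p) → ℝ := fun i ab => if ab.1 = i then h ab.2 else 0 with hcdef
  have hcS : ∀ i, ∑ ab : Fin m × Fin p, c i ab ^ 2 = S := by
    intro i
    rw [Fintype.sum_prod_type, Finset.sum_eq_single i]
    · simp [hcdef, hSdef]
    · intro a _ ha; simp [hcdef, ha]
    · simp
  have hcS' : ∀ i, ∑ ab : Fin m × Fin p, (- c i ab) ^ 2 = S := by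
    intro i; simp only [neg_sq]; exact hcS i
  have hX : ∀ ω i, (W ω *ᵥ h) i = ∑ ab : Fin m × Fin p, c i ab * vec ω ab := by
    intro ω i
    rw [Fintype.sum_prod_type, Finset.sum_eq_single i]
    · simp [Matrix.mulVec, dotProduct, hcdef, hvecdef, mul_comm]
    · intro a _ ha; simp [hcdef, ha]
    · simp
  have hexpL : Real.exp (- t ^ 2 / (2 * (β : ℝ) * S)) = δ / (2 * m) := by
    rw [ht2]
    have h1 : 2 * v * L / (2 * (β : ℝ) * S) = L := by
      rw [hvdef]; field_simp
    rw [neg_div, h1, Real.exp_neg, hLdef, Real.exp_log (by positivity), inv_div]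
  have htail : ∀ d : (Fin m × Fin p) → ℝ, (∑ ab, d ab ^ 2 = S) →
      μ {x | t ≤ ∑ ab, d ab * x ab} ≤ ENNReal.ofReal (δ / (2 * m)) := by
    intro d hd
    have h1 := gauss_tail hβ' d (hd ▸ hS) ht0
    rw [hd, hexpL] at h1
    exact h1
  set A : Fin m → Set ((Fin m × Fin p) → ℝ) :=
    fun i => {x | t ≤ ∑ ab, c i ab * x ab} with hAdef
  set A' : Fin m → Set ((Fin m × Fin p) → ℝ) :=
    fun i => {x | t ≤ ∑ ab, (- c i ab) * x ab} with hA'def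
  have hAmeas : ∀ i, MeasurableSet (A i) := fun i =>
    measurableSet_le measurable_const
      (Finset.measurable_sum _ fun ab _ => (measurable_pi_apply ab).const_mul _)
  have hA'meas : ∀ i, MeasurableSet (A' i) := fun i =>
    measurableSet_le measurable_const
      (Finset.measurable_sum _ fun ab _ => (measurable_pi_apply ab).const_mul _)
  have hmap : ∀ B : Set ((Fin m × Fin p) → ℝ), MeasurableSet B → P (vec ⁻¹' B) = μ B := by
    intro B hB
    rw [← hW, Measure.map_apply hWm hB]
  set Bad : Set Ω := ⋃ i : Fin m, (vec ⁻¹' A i ∪ vec ⁻¹' A' i) with hBaddef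
  have hPBad : P Bad ≤ ENNReal.ofReal δ := by
    have h1 : P Bad ≤ ∑ i : Fin m, P (vec ⁻¹' A i ∪ vec ⁻¹' A' i) := by
      refine (measure_iUnion_le _).trans ?_
      rw [tsum_fintype]
    have h2 : ∀ i : Fin m, P (vec ⁻¹' A i ∪ vec ⁻¹' A' i)
        ≤ ENNReal.ofReal (δ / (2 * m)) + ENNReal.ofReal (δ / (2 * m)) := by
      intro i
      refine (measure_union_le _ _).trans ?_
      gcongr
      · rw [hmap _ (hAmeas i)]; exact htail _ (hcS i)
      · rw [hmap _ (hA'meas i)]; exact htail _ (hcS' i)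
    refine h1.trans ((Finset.sum_le_sum fun i _ => h2 i).trans ?_)
    rw [Finset.sum_const, Finset.card_univ, Fintype.card_fin,
      ← ENNReal.ofReal_add (by positivity) (by positivity), nsmul_eq_mul,
      (show ((m : ℕ) : ENNReal) = ENNReal.ofReal (m : ℝ) by simp),
      ← ENNReal.ofReal_mul (by positivity)]
    refine le_of_eq (congrArg _ ?_)
    field_simp
    ring
  have hWmeas : ∀ (i : Fin m) (j : Fin p), Measurable fun ω => W ω i j := fun i j =>
    (measurable_pi_apply ((i, j) : Fin m × Fin p)).comp hWm
  have hXmeas : ∀ i : Fin m, Measurable fun ω => (W ω *ᵥ h) i := by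
    intro i
    have hrw : (fun ω => (W ω *ᵥ h) i) = fun ω => ∑ j, W ω i j * h j := by
      funext ω; simp [Matrix.mulVec, dotProduct]
    rw [hrw]
    exact Finset.measurable_sum _ fun j _ => (hWmeas i j).mul_const _
  set G : Set Ω := {ω | ∑ i, (max ((W ω *ᵥ h) i) 0) ^ 2
      ≤ (m : ℝ) * β * L * (1 + Real.log (2 / δ)) * S} with hGdef
  have hGmeas : MeasurableSet G := by
    refine measurableSet_le ?_ measurable_const
    exact Finset.measurable_sum _ fun i _ =>
      ((hXmeas i).max measurable_const).pow_const 2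
  have hsub : Gᶜ ⊆ Bad := by
    intro ω hω
    by_contra hB
    apply hω
    simp only [hBaddef, Set.mem_iUnion, Set.mem_union, not_exists, not_or,
      Set.mem_preimage, hAdef, hA'def, Set.mem_setOf_eq, not_le] at hB
    have hbd : ∀ i : Fin m, ((W ω *ᵥ h) i) ^ 2 ≤ t ^ 2 := by
      intro i
      obtain ⟨h1, h2⟩ := hB i
      have h2' : - ∑ ab : Fin m × Fin p, c i ab * vec ω ab < t := by
        rw [← Finset.sum_neg_distrib]
        simpa only [neg_mul] using h2
      rw [hX ω i]
      exact sq_le_sq' (by linarith) h1.le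
    have hmax : ∀ i : Fin m, (max ((W ω *ᵥ h) i) 0) ^ 2 ≤ t ^ 2 := by
      intro i
      refine le_trans ?_ (hbd i)
      have h0 : (0 : ℝ) ≤ max ((W ω *ᵥ h) i) 0 := le_max_right _ _
      have habs : max ((W ω *ᵥ h) i) 0 ≤ |(W ω *ᵥ h) i| :=
        max_le (le_abs_self _) (abs_nonneg _)
      calc (max ((W ω *ᵥ h) i) 0) ^ 2 ≤ |(W ω *ᵥ h) i| ^ 2 := by gcongr
        _ = ((W ω *ᵥ h) i) ^ 2 := sq_abs _
    show ∑ i, (max ((W ω *ᵥ h) i) 0) ^ 2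
        ≤ (m : ℝ) * β * L * (1 + Real.log (2 / δ)) * S
    have hlog : 1 ≤ Real.log (2 / δ) := by
      rw [Real.le_log_iff_exp_le (by positivity)]
      have he := Real.exp_one_lt_d9
      have h4 : (4 : ℝ) ≤ 2 / δ := by rw [le_div_iff₀ hδ0]; linarith
      linarith
    calc ∑ i, (max ((W ω *ᵥ h) i) 0) ^ 2 ≤ ∑ _i : Fin m, t ^ 2 :=
          Finset.sum_le_sum fun i _ => hmax i
      _ = (m : ℝ) * t ^ 2 := by
          rw [Finset.sum_const, Finset.card_univ, Fintype.card_fin, nsmul_eq_mul]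
      _ = ((m : ℝ) * β * L * S) * 2 := by rw [ht2, hvdef]; ring
      _ ≤ ((m : ℝ) * β * L * S) * (1 + Real.log (2 / δ)) := by
          have hbase : (0 : ℝ) ≤ (m : ℝ) * β * L * S := by positivity
          have hkey : (2 : ℝ) ≤ 1 + Real.log (2 / δ) := by linarith
          exact mul_le_mul_of_nonneg_left hkey hbase
      _ = (m : ℝ) * β * L * (1 + Real.log (2 / δ)) * S := by ring
  have hPGc : P Gᶜ ≤ ENNReal.ofReal δ := (measure_mono hsub).trans hPBad
  have hcomp : P Gᶜ = 1 - P G := by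
    rw [measure_compl hGmeas (measure_ne_top _ _), measure_univ]
  calc 1 - ENNReal.ofReal δ ≤ 1 - P Gᶜ := tsub_le_tsub_left hPGc 1
    _ = P G := by rw [hcomp, ENNReal.sub_sub_cancel ENNReal.one_ne_top prob_le_one]
end

section
/- Fix the input dimension d ≥ 1, hidden width m ≥ 1, and output dimension o ≥ 1, and for each depth L ≥ 2 let B(L) = o·(d + (L−1)m)/2^{L−1} be the gradient-norm constant of the linearized fully connected ReLU network under LeCun initialization. Then B(L) → 0 as L → ∞; in particular, for any fixed noise variance σ² > 0, dataset size n, number of steps K and step size η, the KL privacy bound 2·B(L)·Kη/(n²σ²) for noisy gradient descent on the linearized network tends to 0 as the depth L tends to infinity. -/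
open Filter

/-- Under LeCun initialization, the gradient-norm constant
`B(L) = o (d + (L−1) m) / 2^{L−1}` of the linearized fully connected ReLU network tends to `0`
as the depth `L → ∞`; in particular, for any fixed noise variance `σ² > 0`, dataset size `n`,
number of steps `K` and step size `η`, the KL privacy bound `2 B(L) K η / (n² σ²)` for noisy
gradient descent on the linearized network tends to `0` as the depth tends to infinity. -/
theorem stmt19 (d m o : ℕ) (hd : 1 ≤ d) (hm : 1 ≤ m) (ho : 1 ≤ o)
    (B : ℕ → ℝ)
    (hB : ∀ L, 2 ≤ L → B L = (o : ℝ) * ((d : ℝ) + ((L : ℝ) - 1) * m) / 2 ^ (L - 1))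
    (σ2 : ℝ) (hσ2 : 0 < σ2) (n K : ℕ) (η : ℝ) :
    Tendsto B atTop (nhds 0) ∧
      Tendsto (fun L => 2 * B L * K * η / ((n : ℝ) ^ 2 * σ2)) atTop (nhds 0) := by
  have hg : Tendsto (fun k : ℕ => (o : ℝ) * ((d : ℝ) + (k : ℝ) * m) / 2 ^ k) atTop (nhds 0) := by
    have h1 : Tendsto (fun k : ℕ => ((o : ℝ) * d) * (1/2 : ℝ) ^ k) atTop (nhds 0) := by
      simpa using (tendsto_pow_atTop_nhds_zero_of_lt_one (by norm_num : (0:ℝ) ≤ 1/2)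
        (by norm_num : (1/2:ℝ) < 1)).const_mul ((o : ℝ) * d)
    have h2 : Tendsto (fun k : ℕ => ((o : ℝ) * m) * ((k : ℝ) * (1/2 : ℝ) ^ k)) atTop (nhds 0) := by
      simpa using (tendsto_self_mul_const_pow_of_lt_one (by norm_num : (0:ℝ) ≤ 1/2)
        (by norm_num : (1/2:ℝ) < 1)).const_mul ((o : ℝ) * m)
    have := h1.add h2
    simp only [add_zero] at this
    refine this.congr fun k => ?_
    field_simp
    ring
    rw [← mul_pow]; norm_num
  have hB0 : Tendsto B atTop (nhds 0) := by
    have hcomp : Tendsto (fun L : ℕ => (o : ℝ) * ((d : ℝ) + ((L - 1 : ℕ) : ℝ) * m) / 2 ^ (L - 1))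
        atTop (nhds 0) := hg.comp (tendsto_sub_atTop_nat 1)
    refine hcomp.congr' ?_
    filter_upwards [eventually_ge_atTop 2] with L hL
    rw [hB L hL]
    congr 2
    have : ((L - 1 : ℕ) : ℝ) = (L : ℝ) - 1 := by
      have : 1 ≤ L := le_trans (by norm_num) hL
      push_cast [Nat.cast_sub this]
      ring
    rw [this]
  refine ⟨hB0, ?_⟩
  have := hB0.const_mul (2 * (K : ℝ) * η / ((n : ℝ) ^ 2 * σ2))
  simp only [mul_zero] at this
  refine this.congr fun L => ?_
  ring
end
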